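/- Let f, g ∈ C²(ℝ²) be 2π-periodic in each variable with f < g pointwise, Ω₁ = {f(x₁,x₂) < x₃ < g(x₁,x₂)}, and let κ : Ω̄₁ → ℂ be continuous and 2π-periodic in x₁,x₂. Suppose E and W are C² vector fields with values in ℂ³ on Ω̄₁, E is α-quasi-periodic, W is (−α)-quasi-periodic, and curl curl E − κ E = 0 and curl curl W − κ W = 0 in Ω₁. Then the Green boundary integrals over the top and bottom profiles of one period cell are equal: ∫_{(0,2π)²} [ (ν_g × curl E)·W − (ν_g × curl W)·E ](x', g(x')) √(1+|∇g(x')|²) dx' = ∫_{(0,2π)²} [ (ν_f × curl E)·W − (ν_f × curl W)·E ](x', f(x')) √(1+|∇f(x')|²) dx', where ν_φ(x') = (−∂₁φ(x'), −∂₂φ(x'), 1)/√(1+|∇φ(x')|²) for φ = g resp. f. (This is the second vector Green identity between two biperiodic graphs, with the vertical side contributions cancelling by quasi-periodicity.) -/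

import Mathlib

noncomputable section

open MeasureTheory Real Set

/-- Points of `ℝ³`. -/
abbrev V3 := Fin 3 → ℝ
/-- Vectors of `ℂ³`. -/
abbrev C3 := Fin 3 → ℂ

/-- The bilinear (unconjugated) dot product on `ℂ³`. -/
def cdot (a b : C3) : ℂ := a 0 * b 0 + a 1 * b 1 + a 2 * b 2

/-- The Euclidean dot product on `ℝ³`. -/
def rdot (a x : V3) : ℝ := a 0 * x 0 + a 1 * x 1 + a 2 * x 2

/-- The cross product, extended bilinearly to `ℂ³`. -/
def cross (a b : C3) : C3 :=
  ![a 1 * b 2 - a 2 * b 1, a 2 * b 0 - a 0 * b 2, a 0 * b 1 - a 1 * b 0]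

/-- Inclusion `ℝ³ ⊆ ℂ³`. -/
def toC3 (v : V3) : C3 := fun i => (v i : ℂ)

/-- Standard basis of `ℝ³`. -/
def stdR (j : Fin 3) : V3 := fun k => if k = j then 1 else 0

/-- Standard basis of `ℂ³`. -/
def stdC (j : Fin 3) : C3 := fun k => if k = j then 1 else 0

/-- The Euclidean norm on `ℝ³`. -/
def enorm3 (v : V3) : ℝ := Real.sqrt (rdot v v)

/-- The squared Hermitian norm on `ℂ³`. -/
def hnormSq (a : C3) : ℝ := Complex.normSq (a 0) + Complex.normSq (a 1) + Complex.normSq (a 2)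

/-- Partial derivative `∂_j F` of a scalar field. -/
def pd (j : Fin 3) (F : V3 → ℂ) (x : V3) : ℂ := fderiv ℝ F x (stdR j)

/-- curl of a `ℂ³`-valued field on `ℝ³`. -/
def curl3 (E : V3 → C3) (x : V3) : C3 :=
  ![pd 1 (fun y => E y 2) x - pd 2 (fun y => E y 1) x,
    pd 2 (fun y => E y 0) x - pd 0 (fun y => E y 2) x,
    pd 0 (fun y => E y 1) x - pd 1 (fun y => E y 0) x]

/-- divergence of a `ℂ³`-valued field on `ℝ³`. -/
def div3 (E : V3 → C3) (x : V3) : ℂ :=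
  pd 0 (fun y => E y 0) x + pd 1 (fun y => E y 1) x + pd 2 (fun y => E y 2) x

/-- Laplacian of a scalar field on `ℝ³`. -/
def lap3 (F : V3 → ℂ) (x : V3) : ℂ :=
  pd 0 (pd 0 F) x + pd 1 (pd 1 F) x + pd 2 (pd 2 F) x

/-- `α_n = (α₁+n₁, α₂+n₂, 0)`. -/
def alphaN (α : ℝ × ℝ) (n : ℤ × ℤ) : V3 := ![α.1 + n.1, α.2 + n.2, 0]

/-- `β_n = (k₀²-|α_n|²)^{1/2}` if `|α_n|² ≤ k₀²`, and `i(|α_n|²-k₀²)^{1/2}` otherwise. -/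
def betaN (k₀ : ℝ) (α : ℝ × ℝ) (n : ℤ × ℤ) : ℂ :=
  if (α.1 + n.1) ^ 2 + (α.2 + n.2) ^ 2 ≤ k₀ ^ 2 then
    ((Real.sqrt (k₀ ^ 2 - ((α.1 + n.1) ^ 2 + (α.2 + n.2) ^ 2)) : ℝ) : ℂ)
  else Complex.I * ((Real.sqrt ((α.1 + n.1) ^ 2 + (α.2 + n.2) ^ 2 - k₀ ^ 2) : ℝ) : ℂ)

/-- `E` is α-quasi-periodic on the set `D`. -/
def QPOn (α : ℝ × ℝ) (D : Set V3) (E : V3 → C3) : Prop :=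
  ∀ x ∈ D,
    E (x + (2 * π) • stdR 0) = Complex.exp (2 * π * α.1 * Complex.I) • E x ∧
    E (x + (2 * π) • stdR 1) = Complex.exp (2 * π * α.2 * Complex.I) • E x

/-- A function on `ℝ²` is `2π`-periodic in each variable. -/
def Per2 (g : ℝ × ℝ → ℝ) : Prop :=
  ∀ x' : ℝ × ℝ, g (x'.1 + 2 * π, x'.2) = g x' ∧ g (x'.1, x'.2 + 2 * π) = g x'

/-- A subset of `ℝ²` is `2π`-biperiodic. -/
def PerSet (S : Set (ℝ × ℝ)) : Prop :=
  ∀ x' : ℝ × ℝ, (x' ∈ S ↔ (x'.1 + 2 * π, x'.2) ∈ S) ∧ (x' ∈ S ↔ (x'.1, x'.2 + 2 * π) ∈ S)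

/-- Partial derivatives of a function on `ℝ²`. -/
def pdR (j : Fin 2) (φ : ℝ × ℝ → ℝ) (x' : ℝ × ℝ) : ℝ :=
  fderiv ℝ φ x' (if j = 0 then (1, 0) else (0, 1))

/-- Area element `√(1+|∇φ|²)` of the graph of `φ`. -/
def areaEl (φ : ℝ × ℝ → ℝ) (x' : ℝ × ℝ) : ℝ :=
  Real.sqrt (1 + (pdR 0 φ x') ^ 2 + (pdR 1 φ x') ^ 2)

/-- Upward unit normal of the graph of `φ`. -/
def nvec (φ : ℝ × ℝ → ℝ) (x' : ℝ × ℝ) : V3 :=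
  (areaEl φ x')⁻¹ • ![-(pdR 0 φ x'), -(pdR 1 φ x'), 1]

/-- The point `(x₁, x₂, φ(x₁,x₂))` on the graph of `φ`. -/
def graphPt (φ : ℝ × ℝ → ℝ) (x' : ℝ × ℝ) : V3 := ![x'.1, x'.2, φ x']

/-- The point `(x₁, x₂, h)`. -/
def pt3 (x' : ℝ × ℝ) (h : ℝ) : V3 := ![x'.1, x'.2, h]

/-- One period cell `(0,2π)²` of `ℝ²`. -/
def cellSq : Set (ℝ × ℝ) := Set.Ioo 0 (2 * π) ×ˢ Set.Ioo 0 (2 * π)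

/-- The outgoing Rayleigh series with coefficients `En`. -/
def rayleighSeries (k₀ : ℝ) (α : ℝ × ℝ) (En : ℤ × ℤ → C3) : V3 → C3 := fun x =>
  ∑' n : ℤ × ℤ,
    Complex.exp (Complex.I * ((rdot (alphaN α n) x : ℝ) + betaN k₀ α n * (x 2 : ℝ))) • En n

/-- The complex direction vector `d = α_m - β_m e₃` of the incident plane wave. -/
def dVec (k₀ : ℝ) (α : ℝ × ℝ) (m : ℤ × ℤ) : C3 :=
  toC3 (alphaN α m) - betaN k₀ α m • stdC 2

/-- `d · x` for `d ∈ ℂ³`, `x ∈ ℝ³`. -/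
def cdotR (d : C3) (x : V3) : ℂ := d 0 * x 0 + d 1 * x 1 + d 2 * x 2

/-- `p_m = p - ((d·p)/k₀²) d`. -/
def pmVec (k₀ : ℝ) (α : ℝ × ℝ) (m : ℤ × ℤ) (p : C3) : C3 :=
  p - (cdot (dVec k₀ α m) p / (k₀ ^ 2 : ℂ)) • dVec k₀ α m

/-- The incident wave `E^i(x) = (1/k₀²) curl curl [p e^{i d·x}]`. -/
def planeInc (k₀ : ℝ) (α : ℝ × ℝ) (m : ℤ × ℤ) (p : C3) : V3 → C3 := fun x =>
  ((k₀ ^ 2 : ℂ))⁻¹ •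
    curl3 (curl3 fun y => Complex.exp (Complex.I * cdotR (dVec k₀ α m) y) • p) x

/-- The closed layer between the graphs of `f` and `g`. -/
def layer (f g : ℝ × ℝ → ℝ) : Set V3 := {x : V3 | f (x 0, x 1) ≤ x 2 ∧ x 2 ≤ g (x 0, x 1)}

/-- The Green integrand `[(ν_φ × curl E)·W - (ν_φ × curl W)·E](x',φ(x')) √(1+|∇φ(x')|²)`
on the graph of `φ`. -/
def greenGraph (φ : ℝ × ℝ → ℝ) (E W : V3 → C3) (x' : ℝ × ℝ) : ℂ :=
  (cdot (cross (toC3 (nvec φ x')) (curl3 E (graphPt φ x'))) (W (graphPt φ x')) -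
    cdot (cross (toC3 (nvec φ x')) (curl3 W (graphPt φ x'))) (E (graphPt φ x'))) *
    ((areaEl φ x' : ℝ) : ℂ)

/-!
The map `S (x₁, x₂, t) = (x₁, x₂, f + t (g - f))` flattens the layer onto the slab `0 ≤ t ≤ 1`.
The field `U = curl E × W - curl W × E` has divergence `curl curl E · W - curl curl W · E`, which
vanishes because both fields solve the same equation. Its Piola transform
`P = det (DS) (DS)⁻¹ (U ∘ S)` is then divergence free as well, since `div P = det (DS) (div U) ∘ S`.
The phases of `E` and `W` cancel, so `U`, hence `P`, is `2π`-periodic in `x₁` and `x₂`: in the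
divergence theorem for `P` on the box `[0, 2π]² × [0, 1]` the lateral faces cancel, and the top and
bottom faces carry the two Green integrals, because `(ν × curl E) · W = ν · (curl E × W)`.
-/

open Topology

section PartialDerivatives

variable {F G : V3 → ℂ} {x : V3}

lemma stdR_eq_single (j : Fin 3) : stdR j = Pi.single j 1 := by
  funext k
  simp [stdR, Pi.single_apply]

lemma pd_sub (hF : DifferentiableAt ℝ F x) (hG : DifferentiableAt ℝ G x) (j : Fin 3) :
    pd j (fun y => F y - G y) x = pd j F x - pd j G x := by
  simp [pd, fderiv_fun_sub hF hG]

lemma pd_mul (hF : DifferentiableAt ℝ F x) (hG : DifferentiableAt ℝ G x) (j : Fin 3) :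
    pd j (fun y => F y * G y) x = pd j F x * G x + F x * pd j G x := by
  simp [pd, fderiv_fun_mul hF hG]
  ring

lemma pd_ofReal {r : V3 → ℝ} (hr : DifferentiableAt ℝ r x) (j : Fin 3) :
    pd j (fun y => (r y : ℂ)) x = (fderiv ℝ r x (stdR j) : ℂ) := by
  have h := (Complex.ofRealCLM.hasFDerivAt.comp x hr.hasFDerivAt).fderiv
  simp [pd, show (fun y => (r y : ℂ)) = Complex.ofRealCLM ∘ r from rfl, h]

lemma pd_comp {S : V3 → V3} (hF : DifferentiableAt ℝ F (S x)) (hS : DifferentiableAt ℝ S x)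
    (j : Fin 3) :
    pd j (fun y => F (S y)) x = ∑ k, (fderiv ℝ S x (stdR j) k : ℂ) * pd k F (S x) := by
  have h := (hF.hasFDerivAt.comp x hS.hasFDerivAt).fderiv
  simp only [pd, show (fun y => F (S y)) = F ∘ S from rfl, h, ContinuousLinearMap.comp_apply]
  conv_lhs => rw [pi_eq_sum_univ' (fderiv ℝ S x (stdR j))]
  simp [stdR_eq_single, Complex.real_smul]

lemma pd_apply_eq_fderiv {E : V3 → C3} (hE : DifferentiableAt ℝ E x) (i j : Fin 3) :
    pd j (fun y => E y i) x = fderiv ℝ E x (stdR j) i := by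
  simp [pd, (hasFDerivAt_pi'.1 hE.hasFDerivAt i).fderiv]

lemma div3_eq_sum_fderiv {E : V3 → C3} (hE : DifferentiableAt ℝ E x) :
    div3 E x = ∑ i, fderiv ℝ E x (Pi.single i 1) i := by
  simp [div3, Fin.sum_univ_three, pd_apply_eq_fderiv hE, stdR_eq_single]

end PartialDerivatives

section VectorCalculus

variable {a b E W : V3 → C3} {x : V3}

lemma cdot_comm (u v : C3) : cdot u v = cdot v u := by
  simp only [cdot]
  ring

lemma differentiableAt_cross (ha : DifferentiableAt ℝ a x) (hb : DifferentiableAt ℝ b x) :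
    DifferentiableAt ℝ (fun y => cross (a y) (b y)) x := by
  have ha' := differentiableAt_pi.1 ha
  have hb' := differentiableAt_pi.1 hb
  refine differentiableAt_pi.2 fun i => ?_
  fin_cases i <;> simp [cross] <;> fun_prop

lemma div3_sub (ha : DifferentiableAt ℝ a x) (hb : DifferentiableAt ℝ b x) :
    div3 (fun y => a y - b y) x = div3 a x - div3 b x := by
  have ha' := differentiableAt_pi.1 ha
  have hb' := differentiableAt_pi.1 hb
  simp only [div3, Pi.sub_apply, pd_sub, ha', hb']
  ring

lemma div3_cross (ha : DifferentiableAt ℝ a x) (hb : DifferentiableAt ℝ b x) :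
    div3 (fun y => cross (a y) (b y)) x = cdot (curl3 a x) (b x) - cdot (a x) (curl3 b x) := by
  have ha' := differentiableAt_pi.1 ha
  have hb' := differentiableAt_pi.1 hb
  simp only [div3, cross, Matrix.cons_val_zero, Matrix.cons_val_one, Matrix.cons_val_two,
    Matrix.head_cons, Matrix.tail_cons]
  simp only [pd_sub, pd_mul, ha', hb', DifferentiableAt.fun_mul]
  simp only [cdot, curl3, Matrix.cons_val_zero, Matrix.cons_val_one, Matrix.cons_val_two,
    Matrix.head_cons, Matrix.tail_cons]
  ring

lemma curl3_eq_fderiv (hE : DifferentiableAt ℝ E x) :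
    curl3 E x = ![fderiv ℝ E x (stdR 1) 2 - fderiv ℝ E x (stdR 2) 1,
      fderiv ℝ E x (stdR 2) 0 - fderiv ℝ E x (stdR 0) 2,
      fderiv ℝ E x (stdR 0) 1 - fderiv ℝ E x (stdR 1) 0] := by
  simp only [curl3, pd_apply_eq_fderiv hE]

lemma ContDiffOn.differentiableOn_curl3 {U : Set V3} (hE : ContDiffOn ℝ 2 E U)
    (hU : IsOpen U) : DifferentiableOn ℝ (curl3 E) U := by
  have hDE : DifferentiableOn ℝ (fderiv ℝ E) U :=
    (hE.fderiv_of_isOpen hU (by norm_num : (1 : WithTop ℕ∞) + 1 ≤ 2)).differentiableOn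
      (by norm_num)
  have hcomp : ∀ i j, DifferentiableOn ℝ (fun y => fderiv ℝ E y (stdR j) i) U := fun i j =>
    ((ContinuousLinearMap.proj i).comp (ContinuousLinearMap.apply ℝ C3 (stdR j))).differentiable
      |>.comp_differentiableOn hDE
  refine DifferentiableOn.congr ?_ fun y hy =>
    curl3_eq_fderiv ((hE.differentiableOn (by norm_num)).differentiableAt (hU.mem_nhds hy))
  refine differentiableOn_pi.2 fun i => ?_
  fin_cases i <;> simp <;> exact (hcomp _ _).sub (hcomp _ _)

def greenField (E W : V3 → C3) (x : V3) : C3 :=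
  cross (curl3 E x) (W x) - cross (curl3 W x) (E x)

lemma differentiableAt_greenField (hE : DifferentiableAt ℝ E x) (hW : DifferentiableAt ℝ W x)
    (hcE : DifferentiableAt ℝ (curl3 E) x) (hcW : DifferentiableAt ℝ (curl3 W) x) :
    DifferentiableAt ℝ (greenField E W) x :=
  (differentiableAt_cross hcE hW).sub (differentiableAt_cross hcW hE)

lemma div3_greenField (hE : DifferentiableAt ℝ E x) (hW : DifferentiableAt ℝ W x)
    (hcE : DifferentiableAt ℝ (curl3 E) x) (hcW : DifferentiableAt ℝ (curl3 W) x) :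
    div3 (greenField E W) x =
      cdot (curl3 (curl3 E) x) (W x) - cdot (curl3 (curl3 W) x) (E x) := by
  unfold greenField
  rw [div3_sub (differentiableAt_cross hcE hW) (differentiableAt_cross hcW hE),
    div3_cross hcE hW, div3_cross hcW hE, cdot_comm (curl3 W x)]
  ring

lemma ContDiffOn.differentiableOn_greenField {U : Set V3}
    (hE : ContDiffOn ℝ 2 E U) (hW : ContDiffOn ℝ 2 W U) (hU : IsOpen U) :
    DifferentiableOn ℝ (greenField E W) U := fun x hx =>
  (differentiableAt_greenField
    ((hE.differentiableOn (by norm_num)).differentiableAt (hU.mem_nhds hx))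
    ((hW.differentiableOn (by norm_num)).differentiableAt (hU.mem_nhds hx))
    ((hE.differentiableOn_curl3 hU).differentiableAt (hU.mem_nhds hx))
    ((hW.differentiableOn_curl3 hU).differentiableAt (hU.mem_nhds hx))).differentiableWithinAt

lemma ContDiffOn.div3_greenField_eq_zero {U : Set V3} {x : V3} {k : ℂ}
    (hE : ContDiffOn ℝ 2 E U) (hW : ContDiffOn ℝ 2 W U) (hU : IsOpen U) (hx : x ∈ U)
    (hEk : curl3 (curl3 E) x = k • E x) (hWk : curl3 (curl3 W) x = k • W x) :
    div3 (greenField E W) x = 0 := by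
  have hUx := hU.mem_nhds hx
  rw [div3_greenField ((hE.differentiableOn (by norm_num)).differentiableAt hUx)
    ((hW.differentiableOn (by norm_num)).differentiableAt hUx)
    ((hE.differentiableOn_curl3 hU).differentiableAt hUx)
    ((hW.differentiableOn_curl3 hU).differentiableAt hUx), hEk, hWk]
  simp only [cdot, Pi.smul_apply, smul_eq_mul]
  ring

end VectorCalculus

section Flattening

variable {p q f g : ℝ × ℝ → ℝ} {y : V3}

lemma hasFDerivAt_comp_horizontal (hp : DifferentiableAt ℝ p (y 0, y 1)) :
    HasFDerivAt (fun z : V3 => p (z 0, z 1))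
      ((fderiv ℝ p (y 0, y 1)).comp
        ((ContinuousLinearMap.proj 0).prod (ContinuousLinearMap.proj 1))) y :=
  hp.hasFDerivAt.comp y ((hasFDerivAt_apply 0 y).prodMk (hasFDerivAt_apply 1 y))

lemma fderiv_comp_horizontal_apply (hp : DifferentiableAt ℝ p (y 0, y 1)) (v : V3) :
    fderiv ℝ (fun z : V3 => p (z 0, z 1)) y v =
      v 0 * pdR 0 p (y 0, y 1) + v 1 * pdR 1 p (y 0, y 1) := by
  rw [(hasFDerivAt_comp_horizontal hp).fderiv]
  have hv : ((v 0, v 1) : ℝ × ℝ) = v 0 • ((1 : ℝ), (0 : ℝ)) + v 1 • ((0 : ℝ), (1 : ℝ)) := by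
    ext <;> simp
  rw [ContinuousLinearMap.comp_apply]
  simp only [ContinuousLinearMap.prod_apply, ContinuousLinearMap.proj_apply]
  rw [hv, map_add, map_smul, map_smul]
  simp [pdR]

def interp (p q : ℝ × ℝ → ℝ) (y : V3) : ℝ := p (y 0, y 1) + y 2 * (q (y 0, y 1) - p (y 0, y 1))

lemma differentiableAt_interp (hp : DifferentiableAt ℝ p (y 0, y 1))
    (hq : DifferentiableAt ℝ q (y 0, y 1)) : DifferentiableAt ℝ (interp p q) y :=
  (hasFDerivAt_comp_horizontal hp).differentiableAt.add
    ((differentiableAt_apply 2 y).mul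
      ((hasFDerivAt_comp_horizontal hq).differentiableAt.sub
        (hasFDerivAt_comp_horizontal hp).differentiableAt))

lemma fderiv_interp_apply (hp : DifferentiableAt ℝ p (y 0, y 1))
    (hq : DifferentiableAt ℝ q (y 0, y 1)) (v : V3) :
    fderiv ℝ (interp p q) y v = v 0 * interp (pdR 0 p) (pdR 0 q) y +
      v 1 * interp (pdR 1 p) (pdR 1 q) y + v 2 * (q (y 0, y 1) - p (y 0, y 1)) := by
  have hP := (hasFDerivAt_comp_horizontal hp).differentiableAt
  have hQ := (hasFDerivAt_comp_horizontal hq).differentiableAt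
  have h := ((hasFDerivAt_apply 2 y).fun_mul (hQ.fun_sub hP).hasFDerivAt).fun_add hP.hasFDerivAt
  rw [show interp p q = fun z => z 2 * (q (z 0, z 1) - p (z 0, z 1)) + p (z 0, z 1) by
    funext z; simp only [interp]; ring, h.fderiv]
  simp [fderiv_fun_sub hQ hP, fderiv_comp_horizontal_apply hp, fderiv_comp_horizontal_apply hq,
    interp]
  ring

lemma differentiable_pdR {φ : ℝ × ℝ → ℝ} (hφ : ContDiff ℝ 2 φ) (j : Fin 2) :
    Differentiable ℝ (pdR j φ) :=
  ((hφ.fderiv_right (by norm_num : (1 : WithTop ℕ∞) + 1 ≤ 2)).differentiable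
    (by norm_num)).clm_apply (differentiable_const _)

def flatten (f g : ℝ × ℝ → ℝ) (y : V3) : V3 := ![y 0, y 1, interp f g y]

lemma hasFDerivAt_flatten (hf : DifferentiableAt ℝ f (y 0, y 1))
    (hg : DifferentiableAt ℝ g (y 0, y 1)) :
    HasFDerivAt (flatten f g) (ContinuousLinearMap.pi
      ![ContinuousLinearMap.proj 0, ContinuousLinearMap.proj 1, fderiv ℝ (interp f g) y]) y := by
  refine hasFDerivAt_pi.2 fun i => ?_
  fin_cases i
  · exact hasFDerivAt_apply 0 y
  · exact hasFDerivAt_apply 1 y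
  · exact (differentiableAt_interp hf hg).hasFDerivAt

lemma fderiv_flatten_apply (hf : DifferentiableAt ℝ f (y 0, y 1))
    (hg : DifferentiableAt ℝ g (y 0, y 1)) (v : V3) :
    fderiv ℝ (flatten f g) y v = ![v 0, v 1, fderiv ℝ (interp f g) y v] := by
  rw [(hasFDerivAt_flatten hf hg).fderiv]
  funext i
  fin_cases i <;> rfl

end Flattening

section Piola

variable {f g : ℝ × ℝ → ℝ} {y : V3}

lemma pd_comp_flatten {F : V3 → ℂ} (hf : Differentiable ℝ f) (hg : Differentiable ℝ g)
    (hF : DifferentiableAt ℝ F (flatten f g y)) (j : Fin 3) :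
    pd j (fun x => F (flatten f g x)) y = stdR j 0 * pd 0 F (flatten f g y) +
      stdR j 1 * pd 1 F (flatten f g y) +
      (fderiv ℝ (interp f g) y (stdR j) : ℂ) * pd 2 F (flatten f g y) := by
  rw [pd_comp hF (hasFDerivAt_flatten (hf _) (hg _)).differentiableAt, Fin.sum_univ_three,
    fderiv_flatten_apply (hf _) (hg _)]
  simp

/-- The Piola transform `(det DS) (DS)⁻¹ (U ∘ S)` of `U` under `S = flatten f g`, for which
`det DS = g - f`. -/
def piola (f g : ℝ × ℝ → ℝ) (U : V3 → C3) (y : V3) : C3 :=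
  ![((g (y 0, y 1) - f (y 0, y 1) : ℝ) : ℂ) * U (flatten f g y) 0,
    ((g (y 0, y 1) - f (y 0, y 1) : ℝ) : ℂ) * U (flatten f g y) 1,
    U (flatten f g y) 2 - (interp (pdR 0 f) (pdR 0 g) y : ℂ) * U (flatten f g y) 0 -
      (interp (pdR 1 f) (pdR 1 g) y : ℂ) * U (flatten f g y) 1]

lemma div3_piola (hf : ContDiff ℝ 2 f) (hg : ContDiff ℝ 2 g) {U : V3 → C3}
    (hU : DifferentiableAt ℝ U (flatten f g y)) :
    div3 (piola f g U) y =
      ((g (y 0, y 1) - f (y 0, y 1) : ℝ) : ℂ) * div3 U (flatten f g y) := by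
  have hf1 : Differentiable ℝ f := hf.differentiable (by norm_num)
  have hg1 : Differentiable ℝ g := hg.differentiable (by norm_num)
  have hS := (hasFDerivAt_flatten (y := y) (hf1 _) (hg1 _)).differentiableAt
  have hUk := differentiableAt_pi.1 hU
  have hu : ∀ k, DifferentiableAt ℝ (fun x => U (flatten f g x) k) y :=
    fun k => (hUk k).comp y hS
  have hgap : DifferentiableAt ℝ (fun x : V3 => g (x 0, x 1) - f (x 0, x 1)) y := by fun_prop
  have hσ : ∀ j, DifferentiableAt ℝ (interp (pdR j f) (pdR j g)) y := fun j =>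
    differentiableAt_interp (differentiable_pdR hf j _) (differentiable_pdR hg j _)
  have hgapC : DifferentiableAt ℝ (fun x : V3 => ((g (x 0, x 1) - f (x 0, x 1) : ℝ) : ℂ)) y := by
    fun_prop
  have hσC : ∀ j, DifferentiableAt ℝ (fun x => (interp (pdR j f) (pdR j g) x : ℂ)) y := by
    fun_prop
  simp only [div3, piola, Matrix.cons_val_zero, Matrix.cons_val_one, Matrix.cons_val_two,
    Matrix.head_cons, Matrix.tail_cons]
  rw [pd_mul hgapC (hu 0), pd_mul hgapC (hu 1),
    pd_sub ((hu 2).fun_sub ((hσC 0).fun_mul (hu 0))) ((hσC 1).fun_mul (hu 1)),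
    pd_sub (hu 2) ((hσC 0).fun_mul (hu 0)), pd_mul (hσC 0) (hu 0), pd_mul (hσC 1) (hu 1),
    pd_ofReal hgap, pd_ofReal hgap, pd_ofReal (hσ 0), pd_ofReal (hσ 1)]
  simp only [pd_comp_flatten hf1 hg1 (hUk _), fderiv_fun_sub
      (hasFDerivAt_comp_horizontal (hg1 _)).differentiableAt
      (hasFDerivAt_comp_horizontal (hf1 _)).differentiableAt,
    fderiv_interp_apply (hf1 _) (hg1 _),
    fderiv_interp_apply (differentiable_pdR hf _ _) (differentiable_pdR hg _ _)]
  simp [stdR, fderiv_comp_horizontal_apply, hf1 _, hg1 _, interp]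
  ring

lemma differentiableAt_piola {U : V3 → C3} (hf : ContDiff ℝ 2 f)
    (hg : ContDiff ℝ 2 g) (hU : DifferentiableAt ℝ U (flatten f g y)) :
    DifferentiableAt ℝ (piola f g U) y := by
  have hf1 : Differentiable ℝ f := hf.differentiable (by norm_num)
  have hg1 : Differentiable ℝ g := hg.differentiable (by norm_num)
  have hu := differentiableAt_pi.1
    (hU.comp y (hasFDerivAt_flatten (y := y) (hf1 _) (hg1 _)).differentiableAt)
  have hgap : DifferentiableAt ℝ (fun x : V3 => ((g (x 0, x 1) - f (x 0, x 1) : ℝ) : ℂ)) y := by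
    fun_prop
  have hσ : ∀ j, DifferentiableAt ℝ (fun x => (interp (pdR j f) (pdR j g) x : ℂ)) y := fun j =>
    Complex.ofRealCLM.differentiableAt.comp y
      (differentiableAt_interp (differentiable_pdR hf j _) (differentiable_pdR hg j _))
  refine differentiableAt_pi.2 fun i => ?_
  fin_cases i
  · exact hgap.mul (hu 0)
  · exact hgap.mul (hu 1)
  · exact ((hu 2).sub ((hσ 0).mul (hu 0))).sub ((hσ 1).mul (hu 1))

end Piola

section Periodicity

variable {E W : V3 → C3} {x v : V3} {c c' : ℂ}

lemma pd_comp_add_of_eventuallyEq {F : V3 → ℂ} (h : (fun y => F (y + v)) =ᶠ[𝓝 x] c • F)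
    (j : Fin 3) : pd j F (x + v) = c * pd j F x := by
  simp only [pd]
  rw [← fderiv_comp_add_right, h.fderiv_eq, fderiv_const_smul_field]
  rfl

lemma curl3_add_of_eventuallyEq (h : ∀ᶠ y in 𝓝 x, E (y + v) = c • E y) :
    curl3 E (x + v) = c • curl3 E x := by
  have hpd : ∀ i j, pd j (fun y => E y i) (x + v) = c * pd j (fun y => E y i) x := fun i j =>
    pd_comp_add_of_eventuallyEq (h.mono fun y hy => by simp [hy]) j
  funext k
  fin_cases k <;> simp [curl3, hpd] <;> ring

lemma cross_smul_smul (a b : ℂ) (u w : C3) : cross (a • u) (b • w) = (a * b) • cross u w := by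
  funext k
  fin_cases k <;> simp [cross] <;> ring

lemma greenField_add_of_eventuallyEq (hE : ∀ᶠ y in 𝓝 x, E (y + v) = c • E y)
    (hW : ∀ᶠ y in 𝓝 x, W (y + v) = c' • W y) (hcc' : c * c' = 1) :
    greenField E W (x + v) = greenField E W x := by
  rw [greenField, greenField, curl3_add_of_eventuallyEq hE, curl3_add_of_eventuallyEq hW,
    hE.self_of_nhds, hW.self_of_nhds, cross_smul_smul, cross_smul_smul, hcc', mul_comm, hcc',
    one_smul, one_smul]

variable {p q f g : ℝ × ℝ → ℝ} {y : V3}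

lemma Function.Periodic.pdR {φ : ℝ × ℝ → ℝ} {w : ℝ × ℝ} (h : Function.Periodic φ w)
    (j : Fin 2) : Function.Periodic (pdR j φ) w := fun x' => by
  simp only [_root_.pdR]
  rw [← fderiv_comp_add_right, show (fun z => φ (z + w)) = φ from funext h]

lemma interp_add (hp : Function.Periodic p (v 0, v 1)) (hq : Function.Periodic q (v 0, v 1))
    (hv : v 2 = 0) : interp p q (y + v) = interp p q y := by
  simp only [interp, Pi.add_apply, hv, add_zero]
  rw [← Prod.mk_add_mk, hp, hq]

lemma flatten_add (hf : Function.Periodic f (v 0, v 1)) (hg : Function.Periodic g (v 0, v 1))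
    (hv : v 2 = 0) : flatten f g (y + v) = flatten f g y + v := by
  funext k
  fin_cases k <;> simp [flatten, interp_add hf hg hv, hv]

lemma piola_add {U : V3 → C3} (hf : Function.Periodic f (v 0, v 1))
    (hg : Function.Periodic g (v 0, v 1)) (hv : v 2 = 0)
    (hU : U (flatten f g y + v) = U (flatten f g y)) : piola f g U (y + v) = piola f g U y := by
  have hgap : g ((y + v) 0, (y + v) 1) - f ((y + v) 0, (y + v) 1) =
      g (y 0, y 1) - f (y 0, y 1) := by
    simp only [Pi.add_apply]
    rw [← Prod.mk_add_mk, hf, hg]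
  simp only [piola, flatten_add hf hg hv, hU, hgap, interp_add (hf.pdR _) (hg.pdR _) hv]

lemma Per2.periodic_stdR {φ : ℝ × ℝ → ℝ} (h : Per2 φ) {j : Fin 3} (hj : j ≠ 2) :
    Function.Periodic φ (((2 * π) • stdR j) 0, ((2 * π) • stdR j) 1) := fun ⟨a, b⟩ => by
  fin_cases j
  · simpa [stdR] using (h (a, b)).1
  · simpa [stdR] using (h (a, b)).2
  · exact absurd rfl hj

end Periodicity

section BoundaryValues

variable {f g : ℝ × ℝ → ℝ} {E W : V3 → C3}

/-- `(ν × a)·b = ν·(a × b)`, and `ν √(1+|∇φ|²) = (-∂₁φ, -∂₂φ, 1)`. -/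
lemma greenGraph_eq (φ : ℝ × ℝ → ℝ) (E W : V3 → C3) (x' : ℝ × ℝ) :
    greenGraph φ E W x' = greenField E W (graphPt φ x') 2 -
      (pdR 0 φ x' : ℂ) * greenField E W (graphPt φ x') 0 -
      (pdR 1 φ x' : ℂ) * greenField E W (graphPt φ x') 1 := by
  have hA : ((areaEl φ x' : ℝ) : ℂ) ≠ 0 := by
    have : 0 < areaEl φ x' := Real.sqrt_pos.2 (by positivity)
    exact_mod_cast this.ne'
  simp only [greenGraph, greenField, cross, cdot, nvec, toC3, Pi.smul_apply, smul_eq_mul,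
    Matrix.cons_val_zero, Matrix.cons_val_one, Matrix.cons_val_two, Matrix.head_cons,
    Matrix.tail_cons, Pi.sub_apply]
  push_cast
  field_simp
  ring

lemma piola_greenField_top (x' : ℝ × ℝ) :
    piola f g (greenField E W) ![x'.1, x'.2, 1] 2 = greenGraph g E W x' := by
  have hS : flatten f g ![x'.1, x'.2, 1] = graphPt g x' := by
    funext k
    fin_cases k <;> simp [flatten, graphPt, interp]
  simp [piola, hS, greenGraph_eq, interp]

lemma piola_greenField_bottom (x' : ℝ × ℝ) :
    piola f g (greenField E W) ![x'.1, x'.2, 0] 2 = greenGraph f E W x' := by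
  have hS : flatten f g ![x'.1, x'.2, 0] = graphPt f x' := by
    funext k
    fin_cases k <;> simp [flatten, graphPt, interp]
  simp [piola, hS, greenGraph_eq, interp]

end BoundaryValues

section Layer

variable {f g : ℝ × ℝ → ℝ} {y : V3}

def openLayer (f g : ℝ × ℝ → ℝ) : Set V3 := {x : V3 | f (x 0, x 1) < x 2 ∧ x 2 < g (x 0, x 1)}

lemma isOpen_openLayer (hf : Continuous f) (hg : Continuous g) : IsOpen (openLayer f g) := by
  have hπ : Continuous fun x : V3 => (x 0, x 1) := (continuous_apply 0).prodMk (continuous_apply 1)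
  exact (isOpen_lt (hf.comp hπ) (continuous_apply 2)).inter
    (isOpen_lt (continuous_apply 2) (hg.comp hπ))

lemma openLayer_subset_layer : openLayer f g ⊆ layer f g := fun _ hx => ⟨hx.1.le, hx.2.le⟩

lemma flatten_mem_layer (hfg : ∀ x', f x' ≤ g x') (hy : y 2 ∈ Icc 0 1) :
    flatten f g y ∈ layer f g := by
  have := hfg (y 0, y 1)
  constructor <;> simp only [flatten, interp, Matrix.cons_val_zero, Matrix.cons_val_one,
    Matrix.cons_val_two, Matrix.head_cons, Matrix.tail_cons] <;> nlinarith [hy.1, hy.2]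

lemma flatten_mem_openLayer (hfg : ∀ x', f x' < g x') (hy : y 2 ∈ Ioo 0 1) :
    flatten f g y ∈ openLayer f g := by
  have := hfg (y 0, y 1)
  constructor <;> simp only [flatten, interp, Matrix.cons_val_zero, Matrix.cons_val_one,
    Matrix.cons_val_two, Matrix.head_cons, Matrix.tail_cons] <;> nlinarith [hy.1, hy.2]

lemma piola_greenField_add {E W : V3 → C3} (hf : Continuous f) (hg : Continuous g)
    (hfg : ∀ x', f x' < g x') (hfper : Per2 f) (hgper : Per2 g) {j : Fin 3} (hj : j ≠ 2)
    {c c' : ℂ} (hcc' : c * c' = 1)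
    (hE : ∀ x ∈ layer f g, E (x + (2 * π) • stdR j) = c • E x)
    (hW : ∀ x ∈ layer f g, W (x + (2 * π) • stdR j) = c' • W x) (hy : y 2 ∈ Ioo 0 1) :
    piola f g (greenField E W) (y + (2 * π) • stdR j) = piola f g (greenField E W) y := by
  have hnhds : openLayer f g ∈ 𝓝 (flatten f g y) :=
    (isOpen_openLayer hf hg).mem_nhds (flatten_mem_openLayer hfg hy)
  refine piola_add (hfper.periodic_stdR hj) (hgper.periodic_stdR hj) (by simp [stdR, hj.symm])
    (greenField_add_of_eventuallyEq ?_ ?_ hcc')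
  · exact Filter.mem_of_superset hnhds fun x hx => hE x (openLayer_subset_layer hx)
  · exact Filter.mem_of_superset hnhds fun x hx => hW x (openLayer_subset_layer hx)

lemma differentiableAt_piola_greenField {E W : V3 → C3} {U : Set V3} (hf : ContDiff ℝ 2 f)
    (hg : ContDiff ℝ 2 g) (hfg : ∀ x', f x' ≤ g x') (hU : IsOpen U) (hlayerU : layer f g ⊆ U)
    (hE : ContDiffOn ℝ 2 E U) (hW : ContDiffOn ℝ 2 W U) (hy : y 2 ∈ Icc 0 1) :
    DifferentiableAt ℝ (piola f g (greenField E W)) y :=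
  differentiableAt_piola hf hg <| (hE.differentiableOn_greenField hW hU).differentiableAt
    (hU.mem_nhds (hlayerU (flatten_mem_layer hfg hy)))

lemma div3_piola_greenField_eq_zero {E W : V3 → C3} {U : Set V3} {κ : V3 → ℂ}
    (hf : ContDiff ℝ 2 f) (hg : ContDiff ℝ 2 g) (hfg : ∀ x', f x' < g x') (hU : IsOpen U)
    (hlayerU : layer f g ⊆ U) (hE : ContDiffOn ℝ 2 E U) (hW : ContDiffOn ℝ 2 W U)
    (hEeq : ∀ x ∈ openLayer f g, curl3 (curl3 E) x = κ x • E x)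
    (hWeq : ∀ x ∈ openLayer f g, curl3 (curl3 W) x = κ x • W x) (hy : y 2 ∈ Ioo 0 1) :
    div3 (piola f g (greenField E W)) y = 0 := by
  have hmem := flatten_mem_openLayer hfg hy
  have hU' := hlayerU (openLayer_subset_layer hmem)
  rw [div3_piola hf hg ((hE.differentiableOn_greenField hW hU).differentiableAt (hU.mem_nhds hU')),
    hE.div3_greenField_eq_zero hW hU hU' (hEeq _ hmem) (hWeq _ hmem), mul_zero]

end Layer

section DivergenceTheorem

variable {M : Type*} [NormedAddCommGroup M] [NormedSpace ℝ M]

lemma setIntegral_Icc_finTwo (F : ℝ × ℝ → M) (u v : Fin 2 → ℝ) :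
    ∫ x in Icc u v, F (x 0, x 1) = ∫ p in Ioo (u 0) (v 0) ×ˢ Ioo (u 1) (v 1), F p := by
  have hpre : (univ.pi fun i => Ioo (u i) (v i)) =
      MeasurableEquiv.finTwoArrow ⁻¹' (Ioo (u 0) (v 0) ×ˢ Ioo (u 1) (v 1)) := by
    ext x
    simp [Fin.forall_fin_two]
  rw [volume_pi, ← setIntegral_congr_set Measure.univ_pi_Ioo_ae_eq_Icc, ← volume_pi, hpre]
  exact (volume_preserving_finTwoArrow ℝ).setIntegral_preimage_emb
    (MeasurableEquiv.measurableEmbedding _) F _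

lemma insertNth_zero_fin_three (t : ℝ) (x : Fin 2 → ℝ) :
    (Fin.insertNth 0 t x : V3) = ![t, x 0, x 1] := by
  funext k
  fin_cases k <;> rfl

lemma insertNth_one_fin_three (t : ℝ) (x : Fin 2 → ℝ) :
    (Fin.insertNth 1 t x : V3) = ![x 0, t, x 1] := by
  funext k
  fin_cases k <;> rfl

lemma insertNth_two_fin_three (t : ℝ) (x : Fin 2 → ℝ) :
    (Fin.insertNth 2 t x : V3) = ![x 0, x 1, t] := by
  funext k
  fin_cases k <;> rfl

lemma setIntegral_face_eq {n : ℕ} {a b : Fin (n + 1) → ℝ} {F : (Fin (n + 1) → ℝ) → M}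
    (i : Fin (n + 1))
    (h : ∀ x ∈ univ.pi fun j => Ioo (a (i.succAbove j)) (b (i.succAbove j)),
      F (i.insertNth (b i) x) = F (i.insertNth (a i) x)) :
    ∫ x in Icc (a ∘ i.succAbove) (b ∘ i.succAbove), F (i.insertNth (b i) x) =
      ∫ x in Icc (a ∘ i.succAbove) (b ∘ i.succAbove), F (i.insertNth (a i) x) := by
  rw [volume_pi, ← setIntegral_congr_set Measure.univ_pi_Ioo_ae_eq_Icc,
    ← setIntegral_congr_set Measure.univ_pi_Ioo_ae_eq_Icc]
  exact setIntegral_congr_fun (MeasurableSet.univ_pi fun _ => measurableSet_Ioo) h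

theorem setIntegral_top_eq_bottom_of_div3_eq_zero {a b : V3} (hab : a ≤ b) {P : V3 → C3}
    (hc : ContinuousOn P (Icc a b))
    (hd : ∀ x ∈ univ.pi fun i => Ioo (a i) (b i), DifferentiableAt ℝ P x)
    (hdiv : ∀ x ∈ univ.pi fun i => Ioo (a i) (b i), div3 P x = 0)
    (hper₀ : ∀ x : V3, x 2 ∈ Ioo (a 2) (b 2) → P (x + (b 0 - a 0) • stdR 0) 0 = P x 0)
    (hper₁ : ∀ x : V3, x 2 ∈ Ioo (a 2) (b 2) → P (x + (b 1 - a 1) • stdR 1) 1 = P x 1) :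
    ∫ p in Ioo (a 0) (b 0) ×ˢ Ioo (a 1) (b 1), P ![p.1, p.2, b 2] 2 =
      ∫ p in Ioo (a 0) (b 0) ×ˢ Ioo (a 1) (b 1), P ![p.1, p.2, a 2] 2 := by
  have hae : (fun x => ∑ i, fderiv ℝ P x (Pi.single i 1) i) =ᵐ[volume.restrict (Icc a b)] 0 := by
    rw [volume_pi, ← Measure.restrict_congr_set Measure.univ_pi_Ioo_ae_eq_Icc]
    refine (ae_restrict_mem (MeasurableSet.univ_pi fun _ => measurableSet_Ioo)).mono
      fun x hx => ?_
    change ∑ i, fderiv ℝ P x (Pi.single i 1) i = 0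
    rw [← div3_eq_sum_fderiv (hd x hx), hdiv x hx]
  have h := integral_divergence_of_hasFDerivAt_off_countable a b hab P (fderiv ℝ P) ∅
    countable_empty hc (fun x hx => (hd x hx.1).hasFDerivAt)
    ((integrableOn_zero).congr_fun_ae hae.symm)
  have hface₀ := setIntegral_face_eq (F := fun x => P x 0) (a := a) (b := b) 0 fun x hx => by
    have hshift : ![a 0, x 0, x 1] + (b 0 - a 0) • stdR 0 = ![b 0, x 0, x 1] := by
      funext k
      fin_cases k <;> simp [stdR]
    simp only [insertNth_zero_fin_three]
    simpa [hshift] using hper₀ ![a 0, x 0, x 1] (hx 1 (mem_univ _))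
  have hface₁ := setIntegral_face_eq (F := fun x => P x 1) (a := a) (b := b) 1 fun x hx => by
    have hshift : ![x 0, a 1, x 1] + (b 1 - a 1) • stdR 1 = ![x 0, b 1, x 1] := by
      funext k
      fin_cases k <;> simp [stdR]
    simp only [insertNth_one_fin_three]
    simpa [hshift] using hper₁ ![x 0, a 1, x 1] (hx 1 (mem_univ _))
  rw [Fin.sum_univ_three] at h
  simp only [integral_congr_ae hae, Pi.zero_apply, integral_zero, hface₀,
    hface₁, sub_self, zero_add, insertNth_two_fin_three] at h
  rw [eq_comm, sub_eq_zero, setIntegral_Icc_finTwo (fun p => P ![p.1, p.2, b 2] 2),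
    setIntegral_Icc_finTwo (fun p => P ![p.1, p.2, a 2] 2)] at h
  exact h

end DivergenceTheorem

theorem statement13_general (α : ℝ × ℝ) (f g : ℝ × ℝ → ℝ)
    (hf : ContDiff ℝ 2 f) (hg : ContDiff ℝ 2 g) (hfper : Per2 f) (hgper : Per2 g)
    (hfg : ∀ x' : ℝ × ℝ, f x' < g x')
    (κ : V3 → ℂ)
    (E W : V3 → C3)
    (hEreg : ∃ U : Set V3, IsOpen U ∧ layer f g ⊆ U ∧ ContDiffOn ℝ 2 E U)
    (hWreg : ∃ U : Set V3, IsOpen U ∧ layer f g ⊆ U ∧ ContDiffOn ℝ 2 W U)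
    (hEqp : QPOn α (layer f g) E) (hWqp : QPOn (-α) (layer f g) W)
    (hEeq : ∀ x : V3, f (x 0, x 1) < x 2 → x 2 < g (x 0, x 1) →
      curl3 (curl3 E) x - κ x • E x = 0)
    (hWeq : ∀ x : V3, f (x 0, x 1) < x 2 → x 2 < g (x 0, x 1) →
      curl3 (curl3 W) x - κ x • W x = 0) :
    (∫ x' in cellSq, greenGraph g E W x') = ∫ x' in cellSq, greenGraph f E W x' := by
  obtain ⟨U, hU, hlayerU, hE, hW⟩ : ∃ U : Set V3, IsOpen U ∧ layer f g ⊆ U ∧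
      ContDiffOn ℝ 2 E U ∧ ContDiffOn ℝ 2 W U := by
    obtain ⟨U₁, hU₁, hlayerU₁, hE⟩ := hEreg
    obtain ⟨U₂, hU₂, hlayerU₂, hW⟩ := hWreg
    exact ⟨U₁ ∩ U₂, hU₁.inter hU₂, subset_inter hlayerU₁ hlayerU₂,
      hE.mono inter_subset_left, hW.mono inter_subset_right⟩
  have hP : ∀ y : V3, y 2 ∈ Icc 0 1 → DifferentiableAt ℝ (piola f g (greenField E W)) y :=
    fun y => differentiableAt_piola_greenField hf hg (fun x' => (hfg x').le) hU hlayerU hE hW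
  have hexp : ∀ t : ℝ, Complex.exp (2 * π * t * Complex.I) *
      Complex.exp (2 * π * (-t : ℝ) * Complex.I) = 1 := fun t => by
    rw [← Complex.exp_add, ← Complex.exp_zero]
    push_cast
    ring_nf
  have key := setIntegral_top_eq_bottom_of_div3_eq_zero (a := 0) (b := ![2 * π, 2 * π, 1])
    (P := piola f g (greenField E W)) (fun i => by fin_cases i <;> simp [pi_pos.le])
    (fun y hy =>
      (hP y ⟨by simpa using hy.1 2, by simpa using hy.2 2⟩).continuousAt.continuousWithinAt)
    (fun y hy => hP y (Ioo_subset_Icc_self (by simpa using hy 2 (mem_univ _))))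
    (fun y hy => div3_piola_greenField_eq_zero hf hg hfg hU hlayerU hE hW
      (fun x hx => sub_eq_zero.1 (hEeq x hx.1 hx.2)) (fun x hx => sub_eq_zero.1 (hWeq x hx.1 hx.2))
      (by simpa using hy 2 (mem_univ _)))
    (fun y hy => by
      simpa using congrFun (piola_greenField_add hf.continuous hg.continuous hfg hfper hgper
        (j := 0) (by decide) (hexp α.1) (fun x hx => (hEqp x hx).1) (fun x hx => (hWqp x hx).1)
        (by simpa using hy)) 0)
    (fun y hy => by
      simpa using congrFun (piola_greenField_add hf.continuous hg.continuous hfg hfper hgper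
        (j := 1) (by decide) (hexp α.2) (fun x hx => (hEqp x hx).2) (fun x hx => (hWqp x hx).2)
        (by simpa using hy)) 1)
  simpa [piola_greenField_top, piola_greenField_bottom, cellSq] using key

/-- the second vector Green identity between two biperiodic graphs: for
an α-quasi-periodic `E` and a (-α)-quasi-periodic `W`, both solving
`curl curl - κ = 0` in the layer, the Green boundary integrals over the top and
bottom profiles of one period cell are equal. -/
theorem statement13 (α : ℝ × ℝ) (f g : ℝ × ℝ → ℝ)
    (hf : ContDiff ℝ 2 f) (hg : ContDiff ℝ 2 g) (hfper : Per2 f) (hgper : Per2 g)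
    (hfg : ∀ x' : ℝ × ℝ, f x' < g x')
    (κ : V3 → ℂ) (hκ : ContinuousOn κ (layer f g))
    (hκper : ∀ x ∈ layer f g,
      κ (x + (2 * π) • stdR 0) = κ x ∧ κ (x + (2 * π) • stdR 1) = κ x)
    (E W : V3 → C3)
    (hEreg : ∃ U : Set V3, IsOpen U ∧ layer f g ⊆ U ∧ ContDiffOn ℝ 2 E U)
    (hWreg : ∃ U : Set V3, IsOpen U ∧ layer f g ⊆ U ∧ ContDiffOn ℝ 2 W U)
    (hEqp : QPOn α (layer f g) E) (hWqp : QPOn (-α) (layer f g) W)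
    (hEeq : ∀ x : V3, f (x 0, x 1) < x 2 → x 2 < g (x 0, x 1) →
      curl3 (curl3 E) x - κ x • E x = 0)
    (hWeq : ∀ x : V3, f (x 0, x 1) < x 2 → x 2 < g (x 0, x 1) →
      curl3 (curl3 W) x - κ x • W x = 0) :
    (∫ x' in cellSq, greenGraph g E W x') = ∫ x' in cellSq, greenGraph f E W x' :=
  statement13_general α f g hf hg hfper hgper hfg κ E W hEreg hWreg hEqp hWqp hEeq hWeq
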